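/- Let K be a nonempty closed subset of ℝⁿ. There exists a Borel measurable map pr : ℝⁿ → ℝⁿ such that for every y ∈ ℝⁿ, pr(y) ∈ K and ‖y − pr(y)‖₂ = inf_{x ∈ K} ‖y − x‖₂, i.e. pr is a measurable selection of the metric projection onto K. -/

import Mathlib

open MeasureTheory Metric Filter Topology

/-!
A Kuratowski–Ryll-Nardzewski construction. Fix a dense sequence `e`; at stage `m` pick the first
`e k` that is `2⁻ᵐ`-close to `F y` and `(2⁻ᵐ + 2¹⁻ᵐ)`-close to the previous choice, which exists by
density because the previous choice was `2¹⁻ᵐ`-close to `F y`. Each choice depends measurably on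
`y` as soon as the sets `{y | F y meets closedBall x r}` are measurable, the choices form a
Cauchy sequence, and the limit lies in the closed set `F y`. For the metric projection onto a
closed set `K` of a proper space those sets are even closed, because the distance to the
compact pieces `K ∩ closedBall x r` is attained.
-/
theorem measurable_sInf_nat {α : Type*} [MeasurableSpace α] {S : α → Set ℕ}
    (hne : ∀ y, (S y).Nonempty) (hS : ∀ k, MeasurableSet {y | k ∈ S y}) :
    Measurable fun y => sInf (S y) := by
  classical
  simp_rw [fun y => Nat.sInf_def (hne y)]
  exact measurable_find _ hS

namespace MeasurableSelection

variable {α X : Type*} [MetricSpace X] (F : α → Set X) (e : ℕ → X)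

noncomputable def step (ε : ℝ) (C : α → Set X) (y : α) : X :=
  e (sInf {k | (F y ∩ closedBall (e k) ε).Nonempty ∧ e k ∈ C y})

noncomputable def approx : ℕ → α → X
  | 0 => step F e 1 fun _ => Set.univ
  | m + 1 => step F e (2⁻¹ ^ (m + 1)) fun y => closedBall (approx m y) (2⁻¹ ^ (m + 1) + 2⁻¹ ^ m)

variable {F e}

theorem step_spec {ε : ℝ} {C : α → Set X} {y : α}
    (h : ∃ k, (F y ∩ closedBall (e k) ε).Nonempty ∧ e k ∈ C y) :
    (F y ∩ closedBall (step F e ε C y) ε).Nonempty ∧ step F e ε C y ∈ C y :=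
  Nat.sInf_mem h

theorem measurable_step [MeasurableSpace α] [MeasurableSpace X] {ε : ℝ} {C : α → Set X}
    (h : ∀ y, ∃ k, (F y ∩ closedBall (e k) ε).Nonempty ∧ e k ∈ C y)
    (hF : ∀ k, MeasurableSet {y | (F y ∩ closedBall (e k) ε).Nonempty})
    (hC : ∀ k, MeasurableSet {y | e k ∈ C y}) :
    Measurable (step F e ε C) :=
  measurable_from_nat.comp (measurable_sInf_nat h fun k => (hF k).inter (hC k))

theorem exists_near_of_near (he : DenseRange e) {y : α} {x : X} {ε δ : ℝ} (hε : 0 < ε)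
    (h : (F y ∩ closedBall x δ).Nonempty) :
    ∃ k, (F y ∩ closedBall (e k) ε).Nonempty ∧ e k ∈ closedBall x (ε + δ) := by
  obtain ⟨s, hsF, hsx⟩ := h
  obtain ⟨k, hk⟩ := he.exists_dist_lt s hε
  refine ⟨k, ⟨s, hsF, mem_closedBall.2 hk.le⟩, mem_closedBall.2 ?_⟩
  calc dist (e k) x ≤ dist (e k) s + dist s x := dist_triangle _ _ _
    _ ≤ ε + δ := add_le_add (by rw [dist_comm]; exact hk.le) hsx

variable (he : DenseRange e)
include he

theorem approx_succ_spec {m : ℕ} {y : α}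
    (h : (F y ∩ closedBall (approx F e m y) (2⁻¹ ^ m)).Nonempty) :
    (F y ∩ closedBall (approx F e (m + 1) y) (2⁻¹ ^ (m + 1))).Nonempty ∧
      approx F e (m + 1) y ∈ closedBall (approx F e m y) (2⁻¹ ^ (m + 1) + 2⁻¹ ^ m) :=
  step_spec (exists_near_of_near he (by positivity) h)

variable (hne : ∀ y, (F y).Nonempty)
include hne

theorem exists_near_zero (y : α) :
    ∃ k, (F y ∩ closedBall (e k) 1).Nonempty ∧ e k ∈ (Set.univ : Set X) := by
  obtain ⟨s, hs⟩ := hne y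
  obtain ⟨k, hk⟩ := he.exists_dist_lt s one_pos
  exact ⟨k, ⟨s, hs, mem_closedBall.2 hk.le⟩, trivial⟩

theorem approx_near (m : ℕ) (y : α) :
    (F y ∩ closedBall (approx F e m y) (2⁻¹ ^ m)).Nonempty := by
  induction m with
  | zero => simpa only [approx, pow_zero] using (step_spec (exists_near_zero he hne y)).1
  | succ m ih => exact (approx_succ_spec he ih).1

theorem dist_approx_succ_le (m : ℕ) (y : α) :
    dist (approx F e (m + 1) y) (approx F e m y) ≤ 2⁻¹ ^ (m + 1) + 2⁻¹ ^ m :=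
  (approx_succ_spec he (approx_near he hne m y)).2

theorem measurable_approx [MeasurableSpace α] [MeasurableSpace X] [OpensMeasurableSpace X]
    (hF : ∀ x r, MeasurableSet {y | (F y ∩ closedBall x r).Nonempty}) (m : ℕ) :
    Measurable (approx F e m) := by
  induction m with
  | zero => exact measurable_step (exists_near_zero he hne) (fun k => hF _ _) fun _ => .univ
  | succ m ih =>
    refine measurable_step (fun y => exists_near_of_near he (by positivity)
      (approx_near he hne m y)) (fun k => hF _ _) fun k => ?_
    simp_rw [mem_closedBall_comm (x := e k)]
    exact ih measurableSet_closedBall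

end MeasurableSelection

open MeasurableSelection in
theorem exists_measurable_selection {α X : Type*} [MeasurableSpace α] [MetricSpace X]
    [CompleteSpace X] [TopologicalSpace.SeparableSpace X] [MeasurableSpace X] [BorelSpace X]
    {F : α → Set X} (hne : ∀ y, (F y).Nonempty) (hcl : ∀ y, IsClosed (F y))
    (hF : ∀ x r, MeasurableSet {y | (F y ∩ closedBall x r).Nonempty}) :
    ∃ f : α → X, Measurable f ∧ ∀ y, f y ∈ F y := by
  cases isEmpty_or_nonempty α
  · exact ⟨isEmptyElim, Subsingleton.measurable, isEmptyElim⟩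
  have : Nonempty X := (hne (Classical.arbitrary α)).to_subtype.map Subtype.val
  obtain ⟨e, he⟩ := TopologicalSpace.exists_dense_seq X
  have hlim (y : α) : ∃ x, Tendsto (approx F e · y) atTop (𝓝 x) :=
    cauchySeq_tendsto_of_complete <|
      cauchySeq_of_le_geometric 2⁻¹ (3 / 2) (by norm_num) fun m => by
        rw [dist_comm]; linarith [dist_approx_succ_le he hne m y, pow_succ (2⁻¹ : ℝ) m]
  choose f hf using hlim
  refine ⟨f, measurable_of_tendsto_metrizable (measurable_approx he hne hF)
    (tendsto_pi_nhds.2 hf), fun y => ?_⟩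
  have hdist : Tendsto (fun m => infDist (approx F e m y) (F y)) atTop (𝓝 0) :=
    squeeze_zero (fun _ => infDist_nonneg) (fun m =>
      let ⟨_, hsF, hs⟩ := approx_near he hne m y
      (infDist_le_dist_of_mem hsF).trans (mem_closedBall'.1 hs))
      (tendsto_pow_atTop_nhds_zero_of_lt_one (by norm_num) (by norm_num))
  rw [(hcl y).mem_iff_infDist_zero (hne y)]
  exact tendsto_nhds_unique (((continuous_infDist_pt _).tendsto _).comp (hf y)) hdist

section MetricProjection

variable {E : Type*} [MetricSpace E]

def metricProj (K : Set E) (y : E) : Set E :=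
  {x ∈ K | dist y x = infDist y K}

variable {K : Set E}

theorem metricProj_nonempty [ProperSpace E] (hK : IsClosed K) (hne : K.Nonempty) (y : E) :
    (metricProj K y).Nonempty :=
  let ⟨x, hx, hxy⟩ := hK.exists_infDist_eq_dist hne y
  ⟨x, hx, hxy.symm⟩

theorem isClosed_metricProj (hK : IsClosed K) (y : E) : IsClosed (metricProj K y) :=
  hK.inter (isClosed_eq (continuous_const.dist continuous_id) continuous_const)

theorem isClosed_setOf_metricProj_inter_nonempty [ProperSpace E] (hK : IsClosed K)
    {C : Set E} (hC : IsClosed C) : IsClosed {y | (metricProj K y ∩ C).Nonempty} := by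
  by_cases hKC : (K ∩ C).Nonempty
  · convert isClosed_le (continuous_infDist_pt (K ∩ C)) (continuous_infDist_pt K) using 1
    ext y
    constructor
    · rintro ⟨x, ⟨hxK, hxy⟩, hxC⟩
      rw [Set.mem_ofPred_eq, ← hxy]
      exact infDist_le_dist_of_mem ⟨hxK, hxC⟩
    · intro hle
      obtain ⟨x, hx, hxy⟩ := (hK.inter hC).exists_infDist_eq_dist hKC y
      exact ⟨x, ⟨hx.1, le_antisymm (hxy ▸ hle) (infDist_le_dist_of_mem hx.1)⟩, hx.2⟩
  · convert isClosed_empty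
    exact Set.eq_empty_of_forall_notMem fun y ⟨x, ⟨hxK, _⟩, hxC⟩ => hKC ⟨x, hxK, hxC⟩

end MetricProjection

theorem measurable_selection_of_metric_projection
    (n : ℕ) (K : Set (EuclideanSpace ℝ (Fin n)))
    (hne : K.Nonempty) (hcl : IsClosed K) :
    ∃ pr : EuclideanSpace ℝ (Fin n) → EuclideanSpace ℝ (Fin n),
      Measurable pr ∧ ∀ y, pr y ∈ K ∧ dist y (pr y) = infDist y K :=
  exists_measurable_selection (metricProj_nonempty hcl hne) (isClosed_metricProj hcl)
    fun _ _ => (isClosed_setOf_metricProj_inter_nonempty hcl isClosed_closedBall).measurableSet
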